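/- arXiv:2512.07243 — 2 statements merged into one kernel-verified Lean document; each statement's English description precedes it below -/
import Mathlib

section
/- Let f : F_2^k → S be a non-constant function and t ≥ 1. Then the optimal redundancy satisfies r^f_ID(k, t) ≥ t. -/
/-- Length of a longest common subsequence of two binary words. -/
noncomputable def lcsLen (x y : List Bool) : ℕ :=
  sSup {n | ∃ z : List Bool, z.length = n ∧ z.Sublist x ∧ z.Sublist y}

/-- The insdel distance `d_ID(x,y) = |x| + |y| - 2·LCS(x,y)`. -/
noncomputable def dID (x y : List Bool) : ℕ :=
  x.length + y.length - 2 * lcsLen x y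

/-- Number of runs (maximal blocks of consecutive equal symbols) of a binary word. -/
def runs (x : List Bool) : ℕ := (x.destutter (· ≠ ·)).length

/-- Maximum run length of a binary word: the largest `n` such that some constant
word of length `n` occurs as a block of consecutive symbols of `x`. -/
noncomputable def maxRun (x : List Bool) : ℕ :=
  sSup {n | ∃ b : Bool, (List.replicate n b).IsInfix x}

/-- `D_t(x)`: the words of length `|x| - t` that are subsequences of `x`. -/
def Dset (t : ℕ) (x : List Bool) : Set (List Bool) :=
  {z | z.length = x.length - t ∧ z.Sublist x}

/-- `I_t(x)`: the words of length `|x| + t` that are supersequences of `x`. -/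
def Iset (t : ℕ) (x : List Bool) : Set (List Bool) :=
  {z | z.length = x.length + t ∧ x.Sublist z}

/-- A systematic encoding `x ↦ (x, p(x))` with redundancy words `p x` of length `r`
is a function-correcting insdel code for `f` correcting `t` insdel errors. -/
noncomputable def IsFCIDC {k : ℕ} {S : Type*} (f : (Fin k → Bool) → S) (t r : ℕ)
    (p : (Fin k → Bool) → List Bool) : Prop :=
  (∀ x, (p x).length = r) ∧
  ∀ x y, f x ≠ f y → 2 * t < dID (List.ofFn x ++ p x) (List.ofFn y ++ p y)

/-- The optimal redundancy `r^f_ID(k,t)`. -/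
noncomputable def optRed {k : ℕ} {S : Type*} (f : (Fin k → Bool) → S) (t : ℕ) : ℕ :=
  sInf {r | ∃ p, IsFCIDC f t r p}

/-- `p` is an irregular insdel-distance code of length `r` for the matrix `I`. -/
noncomputable def IsIrregularCode {M : ℕ} (I : Fin M → Fin M → ℕ) (r : ℕ)
    (p : Fin M → List Bool) : Prop :=
  (∀ i, (p i).length = r) ∧ ∀ i j, I i j ≤ dID (p i) (p j)

/-- `N^(1)_ID(I)`: least length of an irregular insdel-distance code for `I`. -/
noncomputable def N1 {M : ℕ} (I : Fin M → Fin M → ℕ) : ℕ :=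
  sInf {r | ∃ p, IsIrregularCode I r p}

/-- `N^(2)_ID(I; K)`: least length `r ≥ K` of an irregular insdel-distance code for `I`. -/
noncomputable def N2 {M : ℕ} (I : Fin M → Fin M → ℕ) (K : ℕ) : ℕ :=
  sInf {r | K ≤ r ∧ ∃ p, IsIrregularCode I r p}

-- The insdel distance matrix `I_f^(1)(t, x₁, …, x_M)`.
open Classical in
noncomputable def Imat1 {k M : ℕ} {S : Type*} (f : (Fin k → Bool) → S) (t : ℕ)
    (x : Fin M → Fin k → Bool) : Fin M → Fin M → ℕ :=
  fun i j => if f (x i) ≠ f (x j) then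
    2 * t + 2 - dID (List.ofFn (x i)) (List.ofFn (x j)) else 0

-- The insdel distance matrix `I_f^(2)(t, x₁, …, x_M)`.
open Classical in
noncomputable def Imat2 {k M : ℕ} {S : Type*} (f : (Fin k → Bool) → S) (t : ℕ)
    (x : Fin M → Fin k → Bool) : Fin M → Fin M → ℕ :=
  fun i j => if f (x i) ≠ f (x j) then
    2 * t + 2 + 2 * k - dID (List.ofFn (x i)) (List.ofFn (x j)) else 0

/-- The function distance `d^f_ID(a,b)`. -/
noncomputable def dfID {k : ℕ} {S : Type*} (f : (Fin k → Bool) → S) (a b : S) : ℕ :=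
  sInf {d | ∃ x y : Fin k → Bool, f x = a ∧ f y = b ∧ dID (List.ofFn x) (List.ofFn y) = d}

/-- The function distance matrix `I_f^(2)(t, f₁, …, f_E)`, with entries
`max(2(t+1+k) − d^f_ID(f_i, f_j), 0)` off the diagonal and `0` on the diagonal. -/
noncomputable def funMat2 {k E : ℕ} {S : Type*} (f : (Fin k → Bool) → S) (t : ℕ)
    (fs : Fin E → S) : Fin E → Fin E → ℕ :=
  fun i j => if i = j then 0 else 2 * (t + 1 + k) - dfID f (fs i) (fs j)

/-- The uniform `M × M` matrix with off-diagonal entries `d` and zero diagonal. -/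
def uniMat (M d : ℕ) : Fin M → Fin M → ℕ := fun i j => if i = j then 0 else d

/-- The number-of-runs function on `F_2^k`. -/
def runsFn (k : ℕ) (x : Fin k → Bool) : ℕ := runs (List.ofFn x)

/-- The VT-syndrome function `f(x) = Σ_{j=1}^k j·x_j mod (k+1)`. -/
def vtFn (k : ℕ) (x : Fin k → Bool) : ℕ :=
  (∑ j : Fin k, ((j : ℕ) + 1) * (if x j then 1 else 0)) % (k + 1)

/-- The function ball `B^f_ID(u, ρ) = f(B_ID(u, ρ))`. -/
def fball {k : ℕ} {S : Type*} (f : (Fin k → Bool) → S) (u : Fin k → Bool) (ρ : ℕ) : Set S :=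
  f '' {v : Fin k → Bool | dID (List.ofFn u) (List.ofFn v) ≤ ρ}

/-- `V_ID(r, d)`: the maximum size of an insdel ball of (integer) radius `d`
among centers in `F_2^r`. -/
noncomputable def Vid (r : ℕ) (d : ℤ) : ℕ :=
  sSup (Set.range fun x : Fin r → Bool =>
    Nat.card {y : Fin r → Bool | (dID (List.ofFn x) (List.ofFn y) : ℤ) ≤ d})

/-!
Changing one coordinate `i` of a message `x` leaves the subsequence obtained by deleting
position `i` common to both messages, so with redundancy `r` the two codewords have an LCS of
length at least `k - 1` and insdel distance at most `2r + 2`. A non-constant `f` changes value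
under some single-coordinate change, hence `2t < 2r + 2`. The infimum defining the optimal
redundancy is taken over a non-empty set (a unary encoding of the index of `x` works), so the
bound `t ≤ r` passes to it.
-/

open List Function

lemma bddAbove_commonSublist_lengths (x y : List Bool) :
    BddAbove {n | ∃ z : List Bool, z.length = n ∧ z.Sublist x ∧ z.Sublist y} :=
  ⟨x.length, by rintro n ⟨z, rfl, hzx, -⟩; exact hzx.length_le⟩

lemma le_lcsLen {x y z : List Bool} (hx : z.Sublist x) (hy : z.Sublist y) :
    z.length ≤ lcsLen x y :=
  le_csSup (bddAbove_commonSublist_lengths x y) ⟨z, rfl, hx, hy⟩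

lemma lcsLen_le {x y : List Bool} {n : ℕ}
    (h : ∀ z : List Bool, z.Sublist x → z.Sublist y → z.length ≤ n) :
    lcsLen x y ≤ n :=
  csSup_le ⟨0, [], rfl, nil_sublist _, nil_sublist _⟩ <| by
    rintro m ⟨z, rfl, hzx, hzy⟩
    exact h z hzx hzy

lemma lcsLen_comm (x y : List Bool) : lcsLen x y = lcsLen y x :=
  le_antisymm (lcsLen_le fun _ hx hy => le_lcsLen hy hx)
    (lcsLen_le fun _ hy hx => le_lcsLen hx hy)

lemma dID_comm (x y : List Bool) : dID x y = dID y x := by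
  rw [dID, dID, lcsLen_comm, Nat.add_comm]

lemma lcsLen_le_lcsLen_append (x y p q : List Bool) :
    lcsLen x y ≤ lcsLen (x ++ p) (y ++ q) :=
  lcsLen_le fun _ hx hy => le_lcsLen (hx.trans (sublist_append_left _ _))
    (hy.trans (sublist_append_left _ _))

lemma lcsLen_le_count_add_count (x y : List Bool) (c : Bool) :
    lcsLen x y ≤ y.count c + x.count (!c) :=
  lcsLen_le fun z hx hy => by
    rw [← count_not_add_count z c]
    have := hy.count_le c
    have := hx.count_le (!c)
    omega

lemma two_mul_count_sub_le_dID {x y : List Bool} (h : x.length = y.length) (c : Bool) :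
    2 * (x.count c - y.count c) ≤ dID x y := by
  have := lcsLen_le_count_add_count x y c
  have := count_not_add_count x c
  rw [dID]
  omega

lemma ofFn_update {k : ℕ} (x : Fin k → Bool) (i : Fin k) (b : Bool) :
    ofFn (update x i b) = (ofFn x).set i b := by
  apply ext_getElem <;> simp [update_apply, getElem_set, Fin.ext_iff, eq_comm]

lemma sub_one_le_lcsLen_ofFn_update {k : ℕ} (x : Fin k → Bool) (i : Fin k) (b : Bool) :
    k - 1 ≤ lcsLen (ofFn x) (ofFn (update x i b)) := by
  have hlen : ((ofFn x).eraseIdx i).length = k - 1 := by simp [length_eraseIdx]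
  rw [← hlen]
  refine le_lcsLen (eraseIdx_sublist _ _) ?_
  rw [ofFn_update, ← eraseIdx_set_eq]
  exact eraseIdx_sublist _ _

lemma dID_append_update_le {k r : ℕ} (x : Fin k → Bool) (i : Fin k) (b : Bool)
    {p q : List Bool} (hp : p.length = r) (hq : q.length = r) :
    dID (ofFn x ++ p) (ofFn (update x i b) ++ q) ≤ 2 * r + 2 := by
  have := (sub_one_le_lcsLen_ofFn_update x i b).trans (lcsLen_le_lcsLen_append _ _ p q)
  simp only [dID, length_append, length_ofFn, hp, hq]
  omega

-- Walk from `u` to `v`, changing one coordinate at a time.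
lemma exists_update_ne {ι α β : Type*} [Fintype ι] [DecidableEq ι] {f : (ι → α) → β}
    {u v : ι → α} (h : f u ≠ f v) : ∃ x i b, f x ≠ f (update x i b) := by
  by_contra! hupd
  have hwalk : ∀ s : Finset ι, f u = f (s.piecewise v u) := by
    intro s
    induction s using Finset.induction_on with
    | empty => rw [Finset.piecewise_empty]
    | insert j s _ ih => rw [Finset.piecewise_insert, ← hupd, ih]
  exact h (by simpa using hwalk Finset.univ)

-- Appending `N · e x` zeros, padded by ones, for an injective index `e` separates the zero
-- counts of any two distinct codewords by at least `N - k = t + 1`.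
lemma exists_isFCIDC {k : ℕ} {S : Type*} (f : (Fin k → Bool) → S) (t : ℕ) :
    ∃ r p, IsFCIDC f t r p := by
  set N := t + k + 1
  set M := Fintype.card (Fin k → Bool)
  set e := Fintype.equivFin (Fin k → Bool)
  let p : (Fin k → Bool) → List Bool := fun x =>
    replicate (N * e x) false ++ replicate (N * (M - e x)) true
  have hp : ∀ x, (p x).length = N * M := fun x => by
    have := (e x).isLt
    simp only [p, length_append, length_replicate, ← Nat.mul_add]
    congr 1; omega
  have hcount : ∀ x, (ofFn x ++ p x).count false = (ofFn x).count false + N * e x := by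
    simp [p, count_replicate]
  have hcount_le : ∀ x, (ofFn x).count false ≤ k := fun x => by
    simpa using count_le_length (a := false) (l := ofFn x)
  refine ⟨N * M, p, hp, fun x y hxy => ?_⟩
  wlog hlt : e x < e y generalizing x y
  · have hne : e x ≠ e y := fun h => hxy (by rw [e.injective h])
    rw [dID_comm]
    exact this y x hxy.symm (lt_of_le_of_ne (not_lt.mp hlt) hne.symm)
  have hgap : N * e x + N ≤ N * e y := by
    rw [← Nat.mul_succ]; exact Nat.mul_le_mul_left N hlt
  have := two_mul_count_sub_le_dID (x := ofFn y ++ p y) (y := ofFn x ++ p x) (by simp [hp]) false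
  rw [dID_comm, hcount, hcount] at this
  have := hcount_le x
  omega

theorem stmt6_general {S : Type*} (k t : ℕ) (f : (Fin k → Bool) → S)
    (hf : ∃ u v : Fin k → Bool, f u ≠ f v) :
    t ≤ optRed f t := by
  obtain ⟨u, v, huv⟩ := hf
  obtain ⟨x, i, b, hx⟩ := exists_update_ne huv
  refine le_csInf (exists_isFCIDC f t) ?_
  rintro r ⟨p, hlen, hdist⟩
  have := (hdist _ _ hx).trans_le (dID_append_update_le x i b (hlen _) (hlen _))
  omega

theorem stmt6 {S : Type*} (k t : ℕ) (ht : 1 ≤ t) (f : (Fin k → Bool) → S)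
    (hf : ∃ u v : Fin k → Bool, f u ≠ f v) :
    t ≤ optRed f t :=
  stmt6_general k t f hf
end

section
/- Let x, y ∈ F_2^k be binary words of length k ≥ 1, and let i = r_max(x) and j = r_max(y) be their maximum run lengths. Then d_ID(x, y) ≥ 2·⌈ |i − j| / (min(i, j) + 1) ⌉. -/
lemma le_maxRun {x : List Bool} {n : ℕ} {b : Bool}
    (h : (List.replicate n b).IsInfix x) : n ≤ maxRun x := by
  have hbdd : BddAbove {n | ∃ b : Bool, (List.replicate n b).IsInfix x} := by
    refine ⟨x.length, fun m hm => ?_⟩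
    obtain ⟨c, hc⟩ := hm
    simpa using hc.length_le
  exact le_csSup hbdd ⟨b, h⟩

lemma maxRun_spec (x : List Bool) :
    ∃ b : Bool, (List.replicate (maxRun x) b).IsInfix x := by
  have hne : {n | ∃ b : Bool, (List.replicate n b).IsInfix x}.Nonempty :=
    ⟨0, true, by simp⟩
  have hbdd : BddAbove {n | ∃ b : Bool, (List.replicate n b).IsInfix x} := by
    refine ⟨x.length, fun m hm => ?_⟩
    obtain ⟨c, hc⟩ := hm
    simpa using hc.length_le
  exact Nat.sSup_mem hne hbdd

/-- In any binary word `m` whose constant infixes all have length `≤ j`,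
the count of `b` is at most `(count (!b) + 1) * j`. -/
lemma count_le_runs (b : Bool) (j : ℕ) :
    ∀ N (m : List Bool), m.length ≤ N →
      (∀ (c : Bool) (n : ℕ), (List.replicate n c).IsInfix m → n ≤ j) →
      m.count b ≤ (m.count (!b) + 1) * j := by
  intro N
  induction N with
  | zero =>
    intro m hm _
    have : m = [] := List.eq_nil_of_length_eq_zero (Nat.le_zero.mp hm)
    simp [this]
  | succ N ih =>
    intro m hm hruns
    have hlrep : m.takeWhile (· == b) = List.replicate (m.takeWhile (· == b)).length b := by
      apply List.eq_replicate_of_mem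
      intro a ha
      simpa using List.mem_takeWhile_imp ha
    have hlj : (m.takeWhile (· == b)).length ≤ j := by
      apply hruns b
      rw [← hlrep]
      exact (List.takeWhile_prefix _).isInfix
    have hcl : (m.takeWhile (· == b)).count b = (m.takeWhile (· == b)).length := by
      rw [hlrep]; simp
    have hclnb : (m.takeWhile (· == b)).count (!b) = 0 := by
      rw [hlrep]; simp [List.count_replicate]
    rcases hdw : m.dropWhile (· == b) with _ | ⟨hd, tl⟩
    · have hmeq : m = m.takeWhile (· == b) := by
        conv_lhs => rw [← List.takeWhile_append_dropWhile (p := (· == b)) (l := m)]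
        rw [hdw, List.append_nil]
      rw [hmeq, hcl, hclnb]
      nlinarith [hlj]
    · have hhd : hd = !b := by
        have h := List.head?_dropWhile_not (· == b) m
        rw [hdw] at h
        simp only [List.head?_cons] at h
        revert h; cases hd <;> cases b <;> intro h <;>
          first | rfl | exact absurd h (by decide)
      have hmeq : m = m.takeWhile (· == b) ++ hd :: tl := by
        conv_lhs => rw [← List.takeWhile_append_dropWhile (p := (· == b)) (l := m)]
        rw [hdw]
      have htl_len : tl.length ≤ N := by
        have := congrArg List.length hmeq
        simp at this; omega
      have htl_inf : ∀ (c : Bool) (n : ℕ), (List.replicate n c).IsInfix tl → n ≤ j := by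
        intro c n hinf
        apply hruns c n
        apply hinf.trans
        apply List.IsSuffix.isInfix
        rw [hmeq]
        exact (List.suffix_cons hd tl).trans (List.suffix_append _ _)
      have hIH := ih tl htl_len htl_inf
      have hcb : m.count b = (m.takeWhile (· == b)).length + tl.count b := by
        conv_lhs => rw [hmeq]
        rw [List.count_append, hcl, List.count_cons]
        simp [hhd]
      have hcnb : m.count (!b) = tl.count (!b) + 1 := by
        conv_lhs => rw [hmeq]
        rw [List.count_append, hclnb, List.count_cons]
        simp [hhd]
      rw [hcb, hcnb]
      nlinarith [hlj, hIH]

/-- If `z` is a common subsequence of `x` and `y`, then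
`maxRun x ≤ (t+1) * maxRun y + t` where `t = |x| - |z|` (assuming `|y| ≤ |x| + t`,
in particular when `|x| = |y|`). -/
lemma key_lemma (x y z : List Bool) (hzx : z.Sublist x) (hzy : z.Sublist y)
    (hlen : y.length = x.length) :
    maxRun x ≤ (x.length - z.length + 1) * maxRun y + (x.length - z.length) := by
  set t := x.length - z.length with ht
  have hzlen : z.length ≤ x.length := hzx.length_le
  obtain ⟨b, hinf⟩ := maxRun_spec x
  obtain ⟨u, v, huv⟩ := hinf
  -- decompose z as a sublist of u ++ replicate (maxRun x) b ++ v
  rw [← huv, List.append_assoc] at hzx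
  obtain ⟨z1, z23, hzeq, hz1, hz23⟩ := List.sublist_append_iff.mp hzx
  obtain ⟨z2, z3, hzeq2, hz2, hz3⟩ := List.sublist_append_iff.mp hz23
  obtain ⟨m, hmle, hz2rep⟩ := List.sublist_replicate_iff.mp hz2
  subst hzeq2 hz2rep hzeq
  -- length bookkeeping on the x side
  have hxlen : x.length = u.length + maxRun x + v.length := by
    have := congrArg List.length huv
    simp at this; omega
  have him : maxRun x ≤ m + t := by
    have h1 := hz1.length_le
    have h3 := hz3.length_le
    have hzl : (z1 ++ (List.replicate m b ++ z3)).length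
        = z1.length + m + z3.length := by simp; omega
    omega
  -- decompose y around the block of b's
  obtain ⟨y1, y23, hy, hy1, hy23⟩ := List.append_sublist_iff.mp hzy
  obtain ⟨y2, y3, hy2eq, hy2, hy3⟩ := List.append_sublist_iff.mp hy23
  subst hy2eq
  -- the middle part has at most t non-b symbols
  have hcount_b : m ≤ y2.count b := by
    have := hy2.count_le b
    simpa using this
  have hy2len : y2.length ≤ m + t := by
    have h1 := hy1.length_le
    have h3 := hy3.length_le
    have hyl := congrArg List.length hy
    simp at hyl h1 h3 ⊢
    have hzl : (z1 ++ (List.replicate m b ++ z3)).length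
        = z1.length + m + z3.length := by simp; omega
    omega
  have hsplit : y2.count b + y2.count (!b) = y2.length := by
    have h0 := List.count_eq_countP (a := b) (l := y2)
    have h1 := List.length_eq_countP_add_countP (p := (· == b)) (l := y2)
    have h2 : y2.countP (fun a => ¬(a == b)) = y2.count (!b) := by
      rw [List.count_eq_countP]
      apply List.countP_congr
      intro a _
      cases a <;> cases b <;> simp
    omega
  have hcnb : y2.count (!b) ≤ t := by omega
  -- constant infixes of y2 are constant infixes of y
  have hy2runs : ∀ (c : Bool) (n : ℕ), (List.replicate n c).IsInfix y2 → n ≤ maxRun y := by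
    intro c n hinf2
    apply le_maxRun (x := y)
    apply hinf2.trans
    exact ⟨y1, y3, by rw [hy, List.append_assoc]⟩
  have hmain := count_le_runs b (maxRun y) y2.length y2 le_rfl hy2runs
  calc maxRun x ≤ m + t := him
    _ ≤ y2.count b + t := by omega
    _ ≤ (y2.count (!b) + 1) * maxRun y + t := by omega
    _ ≤ (t + 1) * maxRun y + t := by
        have := Nat.mul_le_mul_right (maxRun y) (Nat.add_le_add_right hcnb 1)
        omega

lemma lcs_spec (x y : List Bool) :
    ∃ z : List Bool, z.length = lcsLen x y ∧ z.Sublist x ∧ z.Sublist y := by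
  have hne : {n | ∃ z : List Bool, z.length = n ∧ z.Sublist x ∧ z.Sublist y}.Nonempty :=
    ⟨0, [], rfl, List.nil_sublist x, List.nil_sublist y⟩
  have hbdd : BddAbove {n | ∃ z : List Bool, z.length = n ∧ z.Sublist x ∧ z.Sublist y} := by
    refine ⟨x.length, fun m hm => ?_⟩
    obtain ⟨z, hz, hzx, _⟩ := hm
    exact hz ▸ hzx.length_le
  obtain ⟨z, hz, hzx, hzy⟩ := Nat.sSup_mem hne hbdd
  exact ⟨z, hz, hzx, hzy⟩

theorem stmt15 (k : ℕ) (hk : 1 ≤ k) (x y : List Bool)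
    (hx : x.length = k) (hy : y.length = k) :
    2 * ⌈(Nat.dist (maxRun x) (maxRun y) : ℚ) / ((min (maxRun x) (maxRun y) : ℚ) + 1)⌉
      ≤ (dID x y : ℤ) := by
  obtain ⟨z, hzl, hzx, hzy⟩ := lcs_spec x y
  have hlk : lcsLen x y ≤ k := by
    have := hzx.length_le; omega
  set t := k - lcsLen x y with htdef
  have hdid : dID x y = 2 * t := by
    rw [dID]; omega
  have key1 := key_lemma x y z hzx hzy (by omega)
  have key2 := key_lemma y x z hzy hzx (by omega)
  rw [hx, hzl, ← htdef] at key1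
  rw [hy, hzl, ← htdef] at key2
  have hdist : Nat.dist (maxRun x) (maxRun y) ≤ t * (min (maxRun x) (maxRun y) + 1) := by
    rcases le_total (maxRun x) (maxRun y) with h | h
    · have hmin : min (maxRun x) (maxRun y) = maxRun x := min_eq_left h
      have hd : Nat.dist (maxRun x) (maxRun y) = maxRun y - maxRun x := by
        rw [Nat.dist_eq_sub_of_le h]
      have e1 : (t + 1) * maxRun x + t = t * maxRun x + maxRun x + t := by ring
      have e2 : t * (maxRun x + 1) = t * maxRun x + t := by ring
      rw [hd, hmin]
      omega
    · have hmin : min (maxRun x) (maxRun y) = maxRun y := min_eq_right h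
      have hd : Nat.dist (maxRun x) (maxRun y) = maxRun x - maxRun y := by
        rw [Nat.dist_eq_sub_of_le_right h]
      have e1 : (t + 1) * maxRun y + t = t * maxRun y + maxRun y + t := by ring
      have e2 : t * (maxRun y + 1) = t * maxRun y + t := by ring
      rw [hd, hmin]
      omega
  have hceil : ⌈(Nat.dist (maxRun x) (maxRun y) : ℚ)
      / ((min (maxRun x) (maxRun y) : ℚ) + 1)⌉ ≤ (t : ℤ) := by
    rw [Int.ceil_le]
    rw [div_le_iff₀ (by positivity)]
    push_cast
    exact_mod_cast hdist
  have hdid' : (dID x y : ℤ) = 2 * t := by rw [hdid]; push_cast; ring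
  rw [hdid']
  linarith
end
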